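/- arXiv:1910.13225 — 2 statements merged into one kernel-verified Lean document; each statement's English description precedes it below -/
import Mathlib

section
/- Suppose μ : (0, Y₀] → ℝ is given by μ(Y) = 4π∫₀^Y ρ(y)y² dy with ρ continuous, and suppose ε ≤ 0 and ε − 2μ(Y)/Y > 0 for all Y ∈ (0, Y₀]. Then there exists Y ∈ (0, Y₀] with ρ(Y) < 0; in particular the weak energy condition ρ ≥ 0 fails. -/
open Real

/-- If `μ(Y) = 4π∫₀^Y ρ(y)y²dy` with `ρ` continuous, `ε ≤ 0`, and
`ε - 2μ(Y)/Y > 0` on `(0, Y₀]`, then `ρ` is negative somewhere on `(0, Y₀]`: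
the weak energy condition fails. -/
theorem WEC_violation_nonspherical_static
    (ρ μ : ℝ → ℝ) (ε Y₀ : ℝ) (hY₀ : 0 < Y₀)
    (hρcont : Continuous ρ)
    (hμ : ∀ Y, μ Y = 4 * π * ∫ y in (0 : ℝ)..Y, ρ y * y ^ 2)
    (hε : ε ≤ 0)
    (hstatic : ∀ Y ∈ Set.Ioc (0 : ℝ) Y₀, 0 < ε - 2 * μ Y / Y) :
    ∃ Y ∈ Set.Ioc (0 : ℝ) Y₀, ρ Y < 0 := by
  by_contra h
  push_neg at h
  have hint : 0 ≤ ∫ y in (0:ℝ)..Y₀, ρ y * y ^ 2 := by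
    apply intervalIntegral.integral_nonneg hY₀.le
    intro y hy
    rcases eq_or_lt_of_le hy.1 with h0 | h0
    · simp [← h0]
    · exact mul_nonneg (h y ⟨h0, hy.2⟩) (sq_nonneg y)
  have hμ0 : 0 ≤ μ Y₀ := by
    rw [hμ]
    positivity
  have := hstatic Y₀ ⟨hY₀, le_refl _⟩
  have h2 : 0 ≤ 2 * μ Y₀ / Y₀ := div_nonneg (by linarith) hY₀.le
  linarith
end

section
/- For ε = 0 (planar symmetry) and ρ₀ < 0 constant, let μ(Y) = (4π/3)ρ₀Y³ and define P(Y) by solving the TOV equation P'/(ρ₀+P) = −(μ/Y² + 4πPY)/(−2μ/Y) with boundary condition P(Y_g) = 0. Then explicitly P(Y) = ρ₀·( 2√(|Y_s|/Y_g) / (3√(|Y_s|/Y_g) − √(|Y_s|Y²/Y_g³)) − 1 ) = ρ₀·( 2/(3 − Y/Y_g) − 1 ), and P(Y) > 0 for 0 < Y < Y_g (using ρ₀ < 0). -/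
open Real

/-!
On `0 < Y`, the planar TOV equation with constant density reads `P' = (ρ₀ + P)(ρ₀ + 3P) / (2ρ₀Y)`.
This Riccati equation has the first integral `(ρ₀ + 3P) / ((ρ₀ + P) Y)`, whose value `1 / Y_g` is
fixed by `P(Y_g) = 0`. Solving for `P` gives `P = ρ₀ (Y - Y_g) / (3Y_g - Y) = ρ₀ (2 / (3 - Y/Y_g) - 1)`,
and the radical form is this one with the common factor `√(|Y_s|/Y_g)` cancelled.
-/

theorem eq_of_hasDerivAt_zero_of_continuousOn_Ioc {f : ℝ → ℝ} {a b : ℝ}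
    (hcont : ContinuousOn f (Set.Ioc a b)) (hderiv : ∀ x ∈ Set.Ioo a b, HasDerivAt f 0 x) :
    ∀ x ∈ Set.Ioc a b, f x = f b := by
  intro x hx
  have hsub : Set.Icc x b ⊆ Set.Ioc a b := Set.Icc_subset_Ioc_iff hx.2 |>.mpr ⟨hx.1, le_rfl⟩
  refine (constant_of_has_deriv_right_zero (hcont.mono hsub) (fun y hy => ?_) b ⟨hx.2, le_rfl⟩).symm
  exact (hderiv y ⟨hx.1.trans_le hy.1, hy.2⟩).hasDerivWithinAt

theorem planar_tov_rhs_eq {ρ₀ Y p : ℝ} (hρ₀ : ρ₀ ≠ 0) (hY : Y ≠ 0) :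
    -((4 * π / 3) * ρ₀ * Y ^ 3 / Y ^ 2 + 4 * π * p * Y) / (-(2 * ((4 * π / 3) * ρ₀ * Y ^ 3) / Y)) =
      (ρ₀ + 3 * p) / (2 * ρ₀ * Y) := by
  field_simp

/-- Since `d / 0 = 0` in Lean, the equation alone must rule out `ρ₀ + p = 0`: it would force
`p = -ρ₀ / 3`. -/
theorem planar_tov_solve_deriv {ρ₀ Y p d : ℝ} (hρ₀ : ρ₀ ≠ 0) (hY : Y ≠ 0)
    (h : d / (ρ₀ + p) = (ρ₀ + 3 * p) / (2 * ρ₀ * Y)) :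
    ρ₀ + p ≠ 0 ∧ d = (ρ₀ + p) * (ρ₀ + 3 * p) / (2 * ρ₀ * Y) := by
  have hp : ρ₀ + p ≠ 0 := by
    intro hp
    rw [hp, div_zero, eq_comm, div_eq_zero_iff] at h
    rcases h with h | h
    · exact hρ₀ (by linarith)
    · simp_all
  refine ⟨hp, ?_⟩
  rw [div_eq_iff hp] at h
  rw [h]
  ring

noncomputable def planarTOVInvariant (ρ₀ : ℝ) (P : ℝ → ℝ) (Y : ℝ) : ℝ :=
  (ρ₀ + 3 * P Y) / ((ρ₀ + P Y) * Y)

theorem hasDerivAt_planarTOVInvariant {ρ₀ Y : ℝ} {P : ℝ → ℝ} (hρ₀ : ρ₀ ≠ 0) (hY : Y ≠ 0)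
    (hP : ρ₀ + P Y ≠ 0)
    (hPd : HasDerivAt P ((ρ₀ + P Y) * (ρ₀ + 3 * P Y) / (2 * ρ₀ * Y)) Y) :
    HasDerivAt (planarTOVInvariant ρ₀ P) 0 Y := by
  have hnum := (hPd.const_mul 3).const_add ρ₀
  have hden := (hPd.const_add ρ₀).mul (hasDerivAt_id' Y)
  refine (hnum.div hden (mul_ne_zero hP hY)).congr_deriv ?_
  simp only [Pi.mul_apply]
  field_simp
  ring

theorem eq_of_planarTOVInvariant_eq {ρ₀ Yg Y p : ℝ} (hY : Y ∈ Set.Ioo 0 Yg)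
    (hp : ρ₀ + p ≠ 0) (h : (ρ₀ + 3 * p) / ((ρ₀ + p) * Y) = 1 / Yg) :
    p = ρ₀ * (2 / (3 - Y / Yg) - 1) := by
  have hYg : 0 < Yg := hY.1.trans hY.2
  have h3 : 3 * Yg - Y ≠ 0 := by linarith [hY.2]
  rw [div_eq_div_iff (mul_ne_zero hp hY.1.ne') hYg.ne'] at h
  rw [show 3 - Y / Yg = (3 * Yg - Y) / Yg by field_simp]
  field_simp
  linear_combination h

theorem planar_pressure_pos {ρ₀ Yg Y : ℝ} (hρ₀ : ρ₀ < 0) (hY : Y ∈ Set.Ioo 0 Yg) :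
    0 < ρ₀ * (2 / (3 - Y / Yg) - 1) := by
  have hYg : 0 < Yg := hY.1.trans hY.2
  have hlt : Y / Yg < 1 := (div_lt_one hYg).mpr hY.2
  have hneg : 2 / (3 - Y / Yg) - 1 < 0 := by
    rw [sub_neg, div_lt_one (by linarith)]
    linarith
  exact mul_pos_of_neg_of_neg hρ₀ hneg

theorem sqrt_form_eq_two_div_three_sub {s Yg Y : ℝ} (hs : 0 < s) (hYg : 0 < Yg) (hY : 0 ≤ Y) :
    2 * √(s / Yg) / (3 * √(s / Yg) - √(s * Y ^ 2 / Yg ^ 3)) = 2 / (3 - Y / Yg) := by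
  have hsq : √(s * Y ^ 2 / Yg ^ 3) = √(s / Yg) * (Y / Yg) := by
    rw [show s * Y ^ 2 / Yg ^ 3 = s / Yg * (Y / Yg) ^ 2 by field_simp,
      sqrt_mul (div_pos hs hYg).le, sqrt_sq (div_nonneg hY hYg.le)]
  rw [hsq, show 3 * √(s / Yg) - √(s / Yg) * (Y / Yg) = √(s / Yg) * (3 - Y / Yg) by ring, mul_comm 2,
    mul_div_mul_left _ _ (sqrt_pos.mpr (div_pos hs hYg)).ne']

/-- For planar symmetry (`ε = 0`) with `ρ₀ < 0` constant,
`μ(Y) = (4π/3)ρ₀Y³`, if `P` solves the TOV equation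
`P'/(ρ₀+P) = -(μ/Y² + 4πPY)/(-2μ/Y)` with `P(Y_g) = 0`, then explicitly
`P(Y) = ρ₀(2√(|Y_s|/Y_g)/(3√(|Y_s|/Y_g) - √(|Y_s|Y²/Y_g³)) - 1)
      = ρ₀(2/(3 - Y/Y_g) - 1)`, which is positive on `(0, Y_g)`. -/
theorem planar_incompressible_solution
    (ρ₀ Yg Ys : ℝ) (hρ₀ : ρ₀ < 0) (hYg : 0 < Yg)
    (hYs : Ys = (8 * π / 3) * ρ₀ * Yg ^ 3)
    (μ P : ℝ → ℝ)
    (hμ : ∀ Y, μ Y = (4 * π / 3) * ρ₀ * Y ^ 3)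
    (hPdiff : DifferentiableOn ℝ P (Set.Ioo 0 Yg))
    (hPcont : ContinuousOn P (Set.Ioc 0 Yg))
    (hTOV : ∀ Y ∈ Set.Ioo (0 : ℝ) Yg,
      deriv P Y / (ρ₀ + P Y) =
        -(μ Y / Y ^ 2 + 4 * π * P Y * Y) / (-(2 * μ Y / Y)))
    (hbc : P Yg = 0) :
    ∀ Y ∈ Set.Ioo (0 : ℝ) Yg,
      P Y = ρ₀ * (2 * Real.sqrt (|Ys| / Yg) /
        (3 * Real.sqrt (|Ys| / Yg) - Real.sqrt (|Ys| * Y ^ 2 / Yg ^ 3)) - 1) ∧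
      P Y = ρ₀ * (2 / (3 - Y / Yg) - 1) ∧
      0 < P Y := by
  have hode (Y : ℝ) (hY : Y ∈ Set.Ioo 0 Yg) :
      ρ₀ + P Y ≠ 0 ∧ deriv P Y = (ρ₀ + P Y) * (ρ₀ + 3 * P Y) / (2 * ρ₀ * Y) := by
    have h := hTOV Y hY
    rw [hμ, planar_tov_rhs_eq hρ₀.ne hY.1.ne'] at h
    exact planar_tov_solve_deriv hρ₀.ne hY.1.ne' h
  have hden : ∀ Y ∈ Set.Ioc 0 Yg, (ρ₀ + P Y) * Y ≠ 0 := by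
    rintro Y ⟨hY0, hYg'⟩
    rcases hYg'.lt_or_eq with hlt | rfl
    · exact mul_ne_zero (hode Y ⟨hY0, hlt⟩).1 hY0.ne'
    · simp [hbc, hρ₀.ne, hY0.ne']
  have hinv : ∀ Y ∈ Set.Ioc 0 Yg, planarTOVInvariant ρ₀ P Y = 1 / Yg := by
    have hcont : ContinuousOn (planarTOVInvariant ρ₀ P) (Set.Ioc 0 Yg) :=
      (continuousOn_const.add (continuousOn_const.mul hPcont)).div
        ((continuousOn_const.add hPcont).mul continuousOn_id) hden
    have hconst := eq_of_hasDerivAt_zero_of_continuousOn_Ioc hcont fun Y hY =>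
      hasDerivAt_planarTOVInvariant hρ₀.ne hY.1.ne' (hode Y hY).1 <| (hode Y hY).2 ▸
        (hPdiff.differentiableAt (isOpen_Ioo.mem_nhds hY)).hasDerivAt
    intro Y hY
    rw [hconst Y hY, planarTOVInvariant, hbc, mul_zero, add_zero,
      div_mul_cancel_left₀ hρ₀.ne, one_div]
  intro Y hY
  have hP := eq_of_planarTOVInvariant_eq hY (hode Y hY).1 (hinv Y (Set.Ioo_subset_Ioc_self hY))
  have hYs_pos : 0 < |Ys| := abs_pos.mpr (by rw [hYs]; have := hρ₀.ne; positivity)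
  rw [sqrt_form_eq_two_div_three_sub hYs_pos hYg hY.1.le]
  exact ⟨hP, hP, hP ▸ planar_pressure_pos hρ₀ hY⟩
end
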